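/- arXiv:2411.03746 — 3 statements merged into one kernel-verified Lean document; each statement's English description precedes it below -/
import Mathlib

section
/- Let d ≥ 1, a, b : Fin d → ℝ be families of strictly positive reals, C > 0, and let σ : Fin d → ℝ be strictly positive with ∑_{i} b_i σ_i ≤ C. If equality ∑_{i} a_i / σ_i = (∑_{i} √(a_i b_i))² / C holds, then σ_i = (C / ∑_{j} √(a_j b_j)) · √(a_i / b_i) for every i. (Uniqueness of the optimal noise covariance in Theorem 2: the minimum of the Fisher information trace under the utility budget is attained only at the profile σ_i ∝ √(a_i/b_i) saturating the budget.) -/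
/-- Uniqueness of the optimal noise covariance: if a strictly positive `σ` satisfies the
utility budget `∑ i, b i * σ i ≤ C` and attains the minimal Fisher information trace
`(∑ i, √(a i b i))² / C`, then `σ i = (C / ∑ j √(a j b j)) · √(a i / b i)` for every `i`. -/
theorem optimal_noise_unique {d : ℕ} (hd : 1 ≤ d) (a b : Fin d → ℝ)
    (ha : ∀ i, 0 < a i) (hb : ∀ i, 0 < b i) (C : ℝ) (hC : 0 < C)
    (σ : Fin d → ℝ) (hσ : ∀ i, 0 < σ i) (hbudget : ∑ i, b i * σ i ≤ C)
    (heq : ∑ i, a i / σ i = (∑ i, Real.sqrt (a i * b i)) ^ 2 / C) :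
    ∀ i, σ i = (C / ∑ j, Real.sqrt (a j * b j)) * Real.sqrt (a i / b i) := by
  set S := ∑ j, Real.sqrt (a j * b j) with hS
  have hSpos : 0 < S :=
    Finset.sum_pos (fun j _ => Real.sqrt_pos.2 (mul_pos (ha j) (hb j)))
      ⟨⟨0, hd⟩, Finset.mem_univ _⟩
  set lam := S / C with hlam
  have hlampos : 0 < lam := div_pos hSpos hC
  have expand : ∀ j, (Real.sqrt (a j / σ j) - lam * Real.sqrt (b j * σ j)) ^ 2
      = a j / σ j - 2 * lam * Real.sqrt (a j * b j) + lam ^ 2 * (b j * σ j) := by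
    intro j
    have h1 : Real.sqrt (a j / σ j) ^ 2 = a j / σ j :=
      Real.sq_sqrt (div_pos (ha j) (hσ j)).le
    have h2 : Real.sqrt (b j * σ j) ^ 2 = b j * σ j :=
      Real.sq_sqrt (mul_pos (hb j) (hσ j)).le
    have h3 : Real.sqrt (a j / σ j) * Real.sqrt (b j * σ j) = Real.sqrt (a j * b j) := by
      rw [← Real.sqrt_mul (div_pos (ha j) (hσ j)).le]
      congr 1
      have hrw : a j / σ j * (b j * σ j) = a j * b j * (σ j / σ j) := by ring
      rw [hrw, div_self (hσ j).ne', mul_one]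
    nlinarith [h1, h2, h3]
  have key : ∑ j, (Real.sqrt (a j / σ j) - lam * Real.sqrt (b j * σ j)) ^ 2 ≤ 0 := by
    have hsum : ∑ j, (Real.sqrt (a j / σ j) - lam * Real.sqrt (b j * σ j)) ^ 2
        = (∑ j, a j / σ j) - 2 * lam * S + lam ^ 2 * (∑ j, b j * σ j) := by
      simp_rw [expand]
      rw [Finset.sum_add_distrib, Finset.sum_sub_distrib, ← Finset.mul_sum,
        ← Finset.mul_sum]
    rw [hsum, heq, hlam]
    have h1 : (S / C) ^ 2 * (∑ j, b j * σ j) ≤ (S / C) ^ 2 * C :=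
      mul_le_mul_of_nonneg_left hbudget (by positivity)
    have h2 : (S / C) ^ 2 * C = S ^ 2 / C := by field_simp
    have h3 : 2 * (S / C) * S = 2 * (S ^ 2 / C) := by field_simp
    nlinarith [h1, h2, h3]
  have keyeq : ∀ j ∈ Finset.univ,
      (Real.sqrt (a j / σ j) - lam * Real.sqrt (b j * σ j)) ^ 2 = 0 := by
    rw [← Finset.sum_eq_zero_iff_of_nonneg (fun j _ => sq_nonneg _)]
    exact le_antisymm key (Finset.sum_nonneg fun j _ => sq_nonneg _)
  intro i
  have hzero := keyeq i (Finset.mem_univ i)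
  have heach : Real.sqrt (a i / σ i) = lam * Real.sqrt (b i * σ i) := by
    have hd0 : Real.sqrt (a i / σ i) - lam * Real.sqrt (b i * σ i) = 0 :=
      pow_eq_zero_iff (two_ne_zero) |>.mp hzero
    linarith [hd0]
  have hsq1 : Real.sqrt (a i / σ i) ^ 2 = a i / σ i :=
    Real.sq_sqrt (div_pos (ha i) (hσ i)).le
  have hsq2 : Real.sqrt (b i * σ i) ^ 2 = b i * σ i :=
    Real.sq_sqrt (mul_pos (hb i) (hσ i)).le
  have hsquared : a i / σ i = lam ^ 2 * (b i * σ i) := by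
    calc a i / σ i = Real.sqrt (a i / σ i) ^ 2 := hsq1.symm
    _ = (lam * Real.sqrt (b i * σ i)) ^ 2 := by rw [heach]
    _ = lam ^ 2 * (b i * σ i) := by rw [mul_pow, hsq2]
  have hai : a i = lam ^ 2 * b i * σ i ^ 2 := by
    have h := congrArg (· * σ i) hsquared
    rw [div_mul_cancel₀ _ (hσ i).ne'] at h
    rw [h]; ring
  have hsqt : Real.sqrt (a i / b i) ^ 2 = a i / b i :=
    Real.sq_sqrt (div_pos (ha i) (hb i)).le
  have htpos : 0 < C / S * Real.sqrt (a i / b i) :=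
    mul_pos (div_pos hC hSpos) (Real.sqrt_pos.2 (div_pos (ha i) (hb i)))
  have hteq : (C / S * Real.sqrt (a i / b i)) ^ 2 = σ i ^ 2 := by
    rw [mul_pow, hsqt, hai, hlam]
    have hbne := (hb i).ne'
    have hSne := hSpos.ne'
    have hCne := hC.ne'
    field_simp
  have final : C / S * Real.sqrt (a i / b i) = σ i :=
    (sq_eq_sq₀ htpos.le (hσ i).le).mp hteq
  rw [← final, hS]
end

section
/- (Theorem 4, Optimal Gradient Pruning — existence of a threshold-form optimum.) Let d ≥ 1, let a, b : Fin d → ℝ be strictly positive, and let C be a real with 0 < C ≤ ∑_i b_i. Then there exist p* : Fin d → ℝ with 0 ≤ p*_i ≤ 1 for all i, and a threshold t ≥ 0, such that: (1) ∑_i p*_i b_i = C; (2) p*_i = 1 for every i with a_i/b_i < t and p*_i = 0 for every i with a_i/b_i > t; and (3) for every p : Fin d → ℝ with 0 ≤ p_i ≤ 1 for all i and ∑_i p_i b_i ≥ C, one has ∑_i p_i a_i ≥ ∑_i p*_i a_i. (Here p_i is the probability that parameter i is NOT pruned; the optimal randomized pruning keeps the coordinates with the smallest ratio k_i = a_i/b_i,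 pruning those with the largest ratio, and randomizes at most on the borderline ratio.) -/
/-- Optimal gradient pruning: existence of a threshold-form optimum. There exist
keep-probabilities `p* : Fin d → [0,1]` and a threshold `t ≥ 0` such that the budget is
met with equality, coordinates with ratio `a i / b i` below `t` are surely kept, those
above `t` are surely pruned, and `p*` minimizes the expected Fisher trace `∑ i, p i * a i`
among all feasible keep-probability vectors. -/
theorem optimal_pruning_exists {d : ℕ} (hd : 1 ≤ d) (a b : Fin d → ℝ)
    (ha : ∀ i, 0 < a i) (hb : ∀ i, 0 < b i)
    (C : ℝ) (hC0 : 0 < C) (hC : C ≤ ∑ i, b i) :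
    ∃ (p : Fin d → ℝ) (t : ℝ), 0 ≤ t ∧
      (∀ i, 0 ≤ p i ∧ p i ≤ 1) ∧
      (∑ i, p i * b i = C) ∧
      (∀ i, a i / b i < t → p i = 1) ∧
      (∀ i, t < a i / b i → p i = 0) ∧
      (∀ q : Fin d → ℝ, (∀ i, 0 ≤ q i ∧ q i ≤ 1) → C ≤ ∑ i, q i * b i →
        ∑ i, p i * a i ≤ ∑ i, q i * a i) := by
  classical
  haveI : NeZero d := ⟨by omega⟩
  set k : Fin d → ℝ := fun i => a i / b i with hkdef
  have hkpos : ∀ i, 0 < k i := fun i => div_pos (ha i) (hb i)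
  have hkb : ∀ i, k i * b i = a i := fun i => div_mul_cancel₀ _ (hb i).ne'
  have huniv : (Finset.univ : Finset (Fin d)).Nonempty := Finset.univ_nonempty
  set T : Finset ℝ := Finset.image k Finset.univ with hT
  have hTne : T.Nonempty := huniv.image k
  set S : ℝ → ℝ := fun r => ∑ i ∈ Finset.univ.filter (fun i => k i ≤ r), b i with hS
  set T' : Finset ℝ := T.filter (fun r => C ≤ S r) with hT'
  have hT'ne : T'.Nonempty := by
    refine ⟨T.max' hTne, Finset.mem_filter.2 ⟨T.max'_mem hTne, ?_⟩⟩
    have : Finset.univ.filter (fun i => k i ≤ T.max' hTne) = Finset.univ := by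
      refine Finset.filter_true_of_mem fun i _ => ?_
      exact Finset.le_max' T (k i) (Finset.mem_image_of_mem k (Finset.mem_univ i))
    simpa [hS, this] using hC
  set t : ℝ := T'.min' hT'ne with htdef
  have htmem : t ∈ T' := T'.min'_mem hT'ne
  have htT : t ∈ T := (Finset.mem_filter.1 htmem).1
  have htS : C ≤ S t := (Finset.mem_filter.1 htmem).2
  obtain ⟨j, _, hjt⟩ := Finset.mem_image.1 htT
  have ht0 : 0 < t := hjt ▸ hkpos j
  set A : ℝ := ∑ i ∈ Finset.univ.filter (fun i => k i < t), b i with hA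
  set B : ℝ := ∑ i ∈ Finset.univ.filter (fun i => k i = t), b i with hB
  have hBpos : 0 < B := by
    refine Finset.sum_pos (fun i _ => hb i) ⟨j, Finset.mem_filter.2 ⟨Finset.mem_univ j, hjt⟩⟩
  -- A < C
  have hAC : A < C := by
    by_contra hcon
    push_neg at hcon
    have hLne : (Finset.univ.filter (fun i => k i < t)).Nonempty := by
      rcases Finset.eq_empty_or_nonempty (Finset.univ.filter (fun i => k i < t)) with h | h
      · rw [hA, h, Finset.sum_empty] at hcon; linarith
      · exact h
    set L := Finset.univ.filter (fun i => k i < t) with hL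
    have hLimne : (Finset.image k L).Nonempty := hLne.image k
    set r : ℝ := (Finset.image k L).max' hLimne with hr
    obtain ⟨i0, hi0L, hi0r⟩ := Finset.mem_image.1 ((Finset.image k L).max'_mem hLimne)
    have hrt : r < t := by
      rw [hr, ← hi0r]; exact (Finset.mem_filter.1 hi0L).2
    have hrT : r ∈ T := by
      rw [hr, ← hi0r]; exact Finset.mem_image_of_mem k (Finset.mem_univ i0)
    have hfilt : Finset.univ.filter (fun i => k i ≤ r) = L := by
      ext i
      simp only [Finset.mem_filter, Finset.mem_univ, true_and, hL]
      constructor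
      · intro h; exact lt_of_le_of_lt h hrt
      · intro h; exact Finset.le_max' _ _ (Finset.mem_image_of_mem k
          (Finset.mem_filter.2 ⟨Finset.mem_univ i, h⟩))
    have hrT' : r ∈ T' := by
      refine Finset.mem_filter.2 ⟨hrT, ?_⟩
      simpa [hS, hfilt, ← hA] using hcon
    exact absurd (T'.min'_le r hrT') (not_le.2 hrt)
  -- C ≤ A + B
  have hsplit : ∀ i : Fin d, (if k i ≤ t then b i else 0)
      = (if k i < t then b i else 0) + (if k i = t then b i else 0) := by
    intro i
    rcases lt_trichotomy (k i) t with h | h | h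
    · simp [h, h.le, h.ne]
    · simp [h]
    · simp [not_le.2 h, not_lt.2 h.le, h.ne']
  have hStAB : S t = A + B := by
    rw [hS, hA, hB]
    simp only [Finset.sum_filter]
    rw [← Finset.sum_add_distrib]
    exact Finset.sum_congr rfl fun i _ => hsplit i
  have hCAB : C ≤ A + B := hStAB ▸ htS
  set θ : ℝ := (C - A) / B with hθ
  have hθ0 : 0 < θ := div_pos (by linarith) hBpos
  have hθ1 : θ ≤ 1 := (div_le_one hBpos).2 (by linarith)
  set p : Fin d → ℝ := fun i => if k i < t then 1 else if k i = t then θ else 0 with hp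
  refine ⟨p, t, ht0.le, ?_, ?_, ?_, ?_, ?_⟩
  · intro i
    rcases lt_trichotomy (k i) t with h | h | h
    · simp [hp, h]
    · simp [hp, h, hθ0.le, hθ1]
    · simp [hp, not_lt.2 h.le, h.ne']
  · -- budget
    have hpb : ∀ i : Fin d, p i * b i
        = (if k i < t then b i else 0) + (if k i = t then θ * b i else 0) := by
      intro i
      rcases lt_trichotomy (k i) t with h | h | h
      · simp [hp, h, h.ne]
      · simp [hp, h]
      · simp [hp, not_lt.2 h.le, h.ne']
    calc ∑ i, p i * b i
        = ∑ i, ((if k i < t then b i else 0) + (if k i = t then θ * b i else 0)) :=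
          Finset.sum_congr rfl fun i _ => hpb i
      _ = A + θ * B := by
          rw [Finset.sum_add_distrib, hA, hB, Finset.mul_sum]
          simp [Finset.sum_filter, Finset.mul_sum]
      _ = C := by rw [hθ, div_mul_cancel₀ _ hBpos.ne']; ring
  · intro i h; simp [hp, show k i < t from h]
  · intro i h
    have h' : t < k i := h
    simp [hp, not_lt.2 h'.le, h'.ne']
  · intro q hq hqC
    have hpb01 : ∀ i, 0 ≤ p i ∧ p i ≤ 1 := by
      intro i
      rcases lt_trichotomy (k i) t with h | h | h
      · simp [hp, h]
      · simp [hp, h, hθ0.le, hθ1]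
      · simp [hp, not_lt.2 h.le, h.ne']
    have hbudget : ∑ i, p i * b i = C := by
      have hpb : ∀ i : Fin d, p i * b i
          = (if k i < t then b i else 0) + (if k i = t then θ * b i else 0) := by
        intro i
        rcases lt_trichotomy (k i) t with h | h | h
        · simp [hp, h, h.ne]
        · simp [hp, h]
        · simp [hp, not_lt.2 h.le, h.ne']
      calc ∑ i, p i * b i
          = ∑ i, ((if k i < t then b i else 0) + (if k i = t then θ * b i else 0)) :=
            Finset.sum_congr rfl fun i _ => hpb i
        _ = A + θ * B := by
            rw [Finset.sum_add_distrib, hA, hB, Finset.mul_sum]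
            simp [Finset.sum_filter, Finset.mul_sum]
        _ = C := by rw [hθ, div_mul_cancel₀ _ hBpos.ne']; ring
    have key : ∀ i ∈ Finset.univ, 0 ≤ (q i - p i) * (k i - t) * b i := by
      intro i _
      rcases lt_trichotomy (k i) t with h | h | h
      · have hpi : p i = 1 := by simp [hp, h]
        have : q i - p i ≤ 0 := by have := (hq i).2; rw [hpi]; linarith
        have h2 : 0 ≤ (p i - q i) * (t - k i) * b i :=
          mul_nonneg (mul_nonneg (by linarith) (by linarith)) (hb i).le
        nlinarith [h2]
      · simp [h]
      · have hpi : p i = 0 := by simp [hp, not_lt.2 h.le, h.ne']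
        have h1 : 0 ≤ q i - p i := by have := (hq i).1; rw [hpi]; linarith
        exact mul_nonneg (mul_nonneg h1 (by linarith)) (hb i).le
    have h1 : 0 ≤ ∑ i, (q i - p i) * (k i - t) * b i := Finset.sum_nonneg key
    have h2 : ∑ i, (q i - p i) * (k i - t) * b i
        = (∑ i, q i * a i - ∑ i, p i * a i) - t * (∑ i, q i * b i - ∑ i, p i * b i) := by
      rw [← Finset.sum_sub_distrib, ← Finset.sum_sub_distrib, Finset.mul_sum,
        ← Finset.sum_sub_distrib]
      refine Finset.sum_congr rfl fun i _ => ?_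
      have := hkb i
      linear_combination (q i - p i) * this
    have h3 : 0 ≤ t * (∑ i, q i * b i - C) :=
      mul_nonneg ht0.le (by linarith)
    rw [h2, hbudget] at h1
    nlinarith [h1, h3]
end

section
/- (Theorem 4, Optimal Gradient Pruning — necessary conditions at an optimum.) Let d ≥ 1, let a, b : Fin d → ℝ be strictly positive, and let C be a real with 0 < C < ∑_i b_i. Suppose p : Fin d → ℝ with 0 ≤ p_i ≤ 1 for all i and ∑_i p_i b_i ≥ C minimizes ∑_i q_i a_i over all q : Fin d → ℝ with 0 ≤ q_i ≤ 1 and ∑_i q_i b_i ≥ C. Then: (1) ∑_i p_i b_i = C, and (2) for all indices i, j, if p_i > 0 and a_j/b_j < a_i/b_i then p_j = 1. -/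
private lemma sum_update_mul {d : ℕ} (f c : Fin d → ℝ) (i : Fin d) (v : ℝ) :
    ∑ x, Function.update f i v x * c x = ∑ x, f x * c x - f i * c i + v * c i := by
  have h : (fun x => Function.update f i v x * c x)
      = Function.update (fun x => f x * c x) i (v * c i) := by
    funext x
    by_cases hx : x = i <;> simp [Function.update, hx]
  calc ∑ x, Function.update f i v x * c x
      = ∑ x, Function.update (fun x => f x * c x) i (v * c i) x := by rw [h]
    _ = v * c i + ∑ x ∈ Finset.univ \ {i}, f x * c x := by
        rw [Finset.sum_update_of_mem (Finset.mem_univ i)]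
    _ = ∑ x, f x * c x - f i * c i + v * c i := by
        rw [Finset.sum_sdiff_eq_sub (by simp), Finset.sum_singleton]; ring

/-- Optimal gradient pruning: necessary conditions at an optimum. If `p` is a feasible
keep-probability vector minimizing the expected Fisher trace `∑ i, q i * a i` under the
utility budget `∑ i, q i * b i ≥ C` (with `0 < C < ∑ i, b i`), then the budget is met
with equality, and whenever `p i > 0` and `a j / b j < a i / b i`, parameter `j` is
surely kept (`p j = 1`). -/
theorem optimal_pruning_necessary {d : ℕ} (hd : 1 ≤ d) (a b : Fin d → ℝ)
    (ha : ∀ i, 0 < a i) (hb : ∀ i, 0 < b i)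
    (C : ℝ) (hC0 : 0 < C) (hC : C < ∑ i, b i)
    (p : Fin d → ℝ) (hp : ∀ i, 0 ≤ p i ∧ p i ≤ 1) (hpb : C ≤ ∑ i, p i * b i)
    (hopt : ∀ q : Fin d → ℝ, (∀ i, 0 ≤ q i ∧ q i ≤ 1) → C ≤ ∑ i, q i * b i →
      ∑ i, p i * a i ≤ ∑ i, q i * a i) :
    (∑ i, p i * b i = C) ∧
      ∀ i j, 0 < p i → a j / b j < a i / b i → p j = 1 := by
  constructor
  · -- budget tight
    by_contra hne
    have hS : C < ∑ i, p i * b i := lt_of_le_of_ne hpb (Ne.symm hne)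
    have hex : ∃ i, 0 < p i := by
      by_contra hall
      push_neg at hall
      have : ∀ i, p i = 0 := fun i => le_antisymm (hall i) (hp i).1
      have : (∑ i, p i * b i) = 0 := by simp [this]
      linarith
    obtain ⟨i, hpi⟩ := hex
    set S := ∑ k, p k * b k with hSdef
    set δ := min (p i) ((S - C) / b i) with hδdef
    have hδpos : 0 < δ := lt_min hpi (div_pos (by linarith) (hb i))
    have hδle : δ ≤ p i := min_le_left _ _
    have hδle2 : δ * b i ≤ S - C := by
      have := min_le_right (p i) ((S - C) / b i)
      calc δ * b i ≤ (S - C) / b i * b i := by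
            exact mul_le_mul_of_nonneg_right (by rw [hδdef]; exact this) (le_of_lt (hb i))
        _ = S - C := by field_simp [(hb i).ne']
    set q := Function.update p i (p i - δ) with hqdef
    have hqb : ∑ k, q k * b k = S - δ * b i := by
      rw [hqdef, sum_update_mul]; ring
    have hqa : ∑ k, q k * a k = (∑ k, p k * a k) - δ * a i := by
      rw [hqdef, sum_update_mul]; ring
    have hqfeas : ∀ k, 0 ≤ q k ∧ q k ≤ 1 := by
      intro k
      by_cases hk : k = i
      · subst hk; simp only [hqdef, Function.update_self]
        constructor
        · linarith
        · linarith [(hp k).2]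
      · simp only [hqdef, Function.update_of_ne hk]; exact hp k
    have hqC : C ≤ ∑ k, q k * b k := by rw [hqb]; linarith
    have := hopt q hqfeas hqC
    rw [hqa] at this
    nlinarith [ha i]
  · intro i j hpi hratio
    by_contra hpj
    have hpjlt : p j < 1 := lt_of_le_of_ne (hp j).2 hpj
    have hij : j ≠ i := by
      intro h; subst h; exact lt_irrefl _ hratio
    set δ := min (p i) ((1 - p j) * b j / b i) with hδdef
    have hδpos : 0 < δ :=
      lt_min hpi (div_pos (mul_pos (by linarith) (hb j)) (hb i))
    have hδle : δ ≤ p i := min_le_left _ _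
    have hδle2 : δ * b i ≤ (1 - p j) * b j := by
      have h1 : δ ≤ (1 - p j) * b j / b i := min_le_right _ _
      calc δ * b i ≤ (1 - p j) * b j / b i * b i :=
            mul_le_mul_of_nonneg_right h1 (le_of_lt (hb i))
        _ = (1 - p j) * b j := by field_simp [(hb i).ne']
    set ε := δ * b i / b j with hεdef
    have hεpos : 0 < ε := div_pos (mul_pos hδpos (hb i)) (hb j)
    have hεle : ε ≤ 1 - p j := by
      rw [hεdef, div_le_iff₀ (hb j)]; linarith
    have hεb : ε * b j = δ * b i := by
      rw [hεdef]; field_simp [(hb j).ne']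
    set q := Function.update (Function.update p i (p i - δ)) j (p j + ε) with hqdef
    have hqb : ∑ k, q k * b k = ∑ k, p k * b k := by
      rw [hqdef, sum_update_mul, sum_update_mul, Function.update_of_ne hij]
      rw [add_mul] at *
      linarith
    have hqa : ∑ k, q k * a k = (∑ k, p k * a k) - δ * a i + ε * a j := by
      rw [hqdef, sum_update_mul, sum_update_mul, Function.update_of_ne hij]
      ring
    have hqfeas : ∀ k, 0 ≤ q k ∧ q k ≤ 1 := by
      intro k
      by_cases hk : k = j
      · subst hk; simp only [hqdef, Function.update_self]
        exact ⟨by linarith [(hp k).1], by linarith⟩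
      · by_cases hk2 : k = i
        · subst hk2
          simp only [hqdef, Function.update_of_ne (Ne.symm hij), Function.update_self]
          exact ⟨by linarith, by linarith [(hp k).2]⟩
        · simp only [hqdef, Function.update_of_ne hk, Function.update_of_ne hk2]
          exact hp k
    have hqC : C ≤ ∑ k, q k * b k := by rw [hqb]; exact hpb
    have hopt' := hopt q hqfeas hqC
    rw [hqa] at hopt'
    -- need ε * a j < δ * a i
    have key : ε * a j < δ * a i := by
      have h1 : a j / b j * (δ * b i) < a i / b i * (δ * b i) :=
        mul_lt_mul_of_pos_right hratio (mul_pos hδpos (hb i))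
      have h2 : ε * a j = a j / b j * (δ * b i) := by
        rw [hεdef]; field_simp
      have h3 : a i / b i * (δ * b i) = δ * a i := by field_simp [(hb i).ne']
      linarith
    linarith
end
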